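/- Let r, t be integers, s a natural number, and z₁, z₂ complex numbers with |z₂| > |z₁−z₂| > 0. Then the series ∑_{k=0}^{∞} C(r−1, k) · C(k−t−1, s) · z₂^{r−1−k} · (z₁−z₂)^{k−t−s−1} converges absolutely, and its sum equals ∑_{j=0}^{s} C(r−1, j) · C(−t−1, s−j) · z₁^{r−1−j} · (z₁−z₂)^{−t−1−s+j}. (Note that |z₂| > |z₁−z₂| forces z₂ ≠ 0, z₁ ≠ z₂ and z₁ ≠ 0, so all the integer powers appearing are defined.) -/

import Mathlib

/-!
Put `x = (z₁ - z₂) / z₂`, so that `‖x‖ < 1` and `1 + x = z₁ / z₂`; the `k`-th term is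
`z₂ ^ (r - 1) (z₁ - z₂) ^ (-t - s - 1)` times `C(r-1, k) C(k-t-1, s) x ^ k`.
Chu–Vandermonde splits `C(k-t-1, s) = ∑ⱼ C(k, j) C(-t-1, s-j)`, and
`C(k, j) C(r-1, k) = C(r-1, j) C(r-1-j, k-j)`, so for each `j ≤ s` the sum over `k` is
`C(r-1, j) x ^ j` times the binomial series of `(1 + x) ^ (r-1-j)`, which converges absolutely.
-/

/-- The generalized binomial coefficient `C(n, j) = n(n-1)⋯(n-j+1)/j!`,
regarded as a complex number (equal to `1` when `j = 0`). -/
noncomputable def cbinom (n : ℤ) (j : ℕ) : ℂ :=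
  (∏ i ∈ Finset.range j, ((n : ℂ) - (i : ℂ))) / (Nat.factorial j : ℂ)

open Finset

lemma Ring.choose_natCast_add {R : Type*} [CommRing R] [BinomialRing R] (k s : ℕ) (b : R) :
    Ring.choose ((k : R) + b) s =
      ∑ j ∈ range (s + 1), (k.choose j : R) * Ring.choose b (s - j) := by
  rw [Ring.add_choose_eq s (Commute.all _ _), Nat.sum_antidiagonal_eq_sum_range_succ
    (fun i j ↦ Ring.choose (k : R) i * Ring.choose b j)]
  simp only [Ring.choose_natCast]

lemma zpow_sub_natCast_mul_zpow_add_natCast {K : Type*} [Field K] {z u : K} (hz : z ≠ 0)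
    (hu : u ≠ 0) (m n : ℤ) (k : ℕ) :
    z ^ (m - k) * u ^ (n + k) = z ^ m * u ^ n * (u / z) ^ k := by
  rw [zpow_sub₀ hz, zpow_add₀ hu, zpow_natCast, zpow_natCast, div_pow]
  field_simp

lemma cbinom_eq_choose (n : ℤ) (j : ℕ) : cbinom n j = Ring.choose (n : ℂ) j := by
  rw [cbinom, Ring.choose_eq_smul, ← Polynomial.aeval_eq_smeval, Polynomial.aeval_def,
    ← Polynomial.eval_map, descPochhammer_map, descPochhammer_eval_eq_prod_range, smul_eq_mul,
    div_eq_inv_mul]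

namespace Complex

lemma natChoose_mul_choose_mul_pow_add (a x : ℂ) (j m : ℕ) :
    ((m + j).choose j : ℂ) * Ring.choose a (m + j) * x ^ (m + j) =
      Ring.choose a j * x ^ j * (Ring.choose (a - j) m * x ^ m) := by
  have h := Ring.choose_smul_choose a (Nat.le_add_left j m)
  rw [nsmul_eq_mul, Nat.add_sub_cancel] at h
  rw [h, pow_add]
  ring

lemma choose_mul_choose_natCast_add_mul_pow_eq_sum (a b x : ℂ) (s k : ℕ) :
    Ring.choose a k * Ring.choose ((k : ℂ) + b) s * x ^ k =
      ∑ j ∈ range (s + 1),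
        Ring.choose b (s - j) * ((k.choose j : ℂ) * Ring.choose a k * x ^ k) := by
  rw [Ring.choose_natCast_add, mul_sum, sum_mul]
  exact sum_congr rfl fun j _ ↦ by ring

section BinomialSeries

variable {x : ℂ}

lemma mem_eball_zero_one_of_norm_lt_one (hx : ‖x‖ < 1) : x ∈ Metric.eball (0 : ℂ) 1 := by
  simpa [← ENNReal.coe_one, ← NNReal.coe_lt_coe] using hx

lemma summable_norm_choose_mul_pow (a : ℂ) (hx : ‖x‖ < 1) :
    Summable fun n ↦ ‖Ring.choose a n * x ^ n‖ := by
  have hx' := Metric.eball_subset_eball (binomialSeries_radius_ge_one (𝔸 := ℂ) (a := a))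
    (mem_eball_zero_one_of_norm_lt_one hx)
  simpa [binomialSeries, FormalMultilinearSeries.ofScalars_apply_eq, mul_comm] using
    (binomialSeries ℂ a).summable_norm_apply hx'

lemma hasSum_choose_mul_pow (a : ℂ) (hx : ‖x‖ < 1) :
    HasSum (fun n ↦ Ring.choose a n * x ^ n) ((1 + x) ^ a) := by
  have := (one_add_cpow_hasFPowerSeriesOnBall_zero (a := a)).hasSum
    (mem_eball_zero_one_of_norm_lt_one hx)
  rwa [binomialSeries, FormalMultilinearSeries.ofScalars_apply_eq', zero_add] at this

lemma hasSum_natChoose_mul_choose_mul_pow (a : ℂ) (j : ℕ) (hx : ‖x‖ < 1) :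
    HasSum (fun k ↦ (k.choose j : ℂ) * Ring.choose a k * x ^ k)
      (Ring.choose a j * x ^ j * (1 + x) ^ (a - j)) := by
  have hlow : ∑ k ∈ range j, (k.choose j : ℂ) * Ring.choose a k * x ^ k = 0 :=
    sum_eq_zero fun k hk ↦ by simp [Nat.choose_eq_zero_of_lt (mem_range.1 hk)]
  rw [← hasSum_nat_add_iff' j, hlow, sub_zero]
  simp only [natChoose_mul_choose_mul_pow_add]
  exact (hasSum_choose_mul_pow (a - j) hx).mul_left _

lemma summable_norm_natChoose_mul_choose_mul_pow (a : ℂ) (j : ℕ) (hx : ‖x‖ < 1) :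
    Summable fun k ↦ ‖(k.choose j : ℂ) * Ring.choose a k * x ^ k‖ := by
  rw [← summable_nat_add_iff j]
  simp only [natChoose_mul_choose_mul_pow_add, norm_mul _ (_ * _)]
  exact (summable_norm_choose_mul_pow (a - j) hx).mul_left _

lemma hasSum_choose_mul_choose_natCast_add_mul_pow (a b : ℂ) (s : ℕ) (hx : ‖x‖ < 1) :
    HasSum (fun k : ℕ ↦ Ring.choose a k * Ring.choose ((k : ℂ) + b) s * x ^ k)
      (∑ j ∈ range (s + 1),
        Ring.choose b (s - j) * (Ring.choose a j * x ^ j * (1 + x) ^ (a - j))) := by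
  simp only [choose_mul_choose_natCast_add_mul_pow_eq_sum a b x s]
  exact hasSum_sum fun j _ ↦ (hasSum_natChoose_mul_choose_mul_pow a j hx).mul_left _

lemma summable_norm_choose_mul_choose_natCast_add_mul_pow (a b : ℂ) (s : ℕ) (hx : ‖x‖ < 1) :
    Summable fun k : ℕ ↦ ‖Ring.choose a k * Ring.choose ((k : ℂ) + b) s * x ^ k‖ := by
  refine .of_nonneg_of_le (fun _ ↦ norm_nonneg _) (fun k ↦ ?_)
    (summable_sum (s := range (s + 1)) fun j _ ↦
      (summable_norm_natChoose_mul_choose_mul_pow a j hx).mul_left ‖Ring.choose b (s - j)‖)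
  rw [choose_mul_choose_natCast_add_mul_pow_eq_sum]
  exact (norm_sum_le _ _).trans_eq (sum_congr rfl fun j _ ↦ norm_mul _ _)

end BinomialSeries

section LaurentExpansion

variable {z w : ℂ}

lemma choose_mul_choose_mul_zpow_eq (a b : ℤ) (s k : ℕ) (hz : z ≠ 0) (hw : w ≠ 0) :
    Ring.choose (a : ℂ) k * Ring.choose (((k : ℤ) + b : ℤ) : ℂ) s * z ^ (a - k) *
        w ^ ((k : ℤ) + b - s) =
      z ^ a * w ^ (b - s) *
        (Ring.choose (a : ℂ) k * Ring.choose ((k : ℂ) + b) s * (w / z) ^ k) := by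
  rw [mul_assoc _ (z ^ _), show (k : ℤ) + b - s = b - s + k by ring,
    zpow_sub_natCast_mul_zpow_add_natCast hz hw]
  push_cast
  ring

lemma zpow_mul_choose_mul_one_add_cpow_eq (a b : ℤ) (s j : ℕ) (hz : z ≠ 0) (hw : w ≠ 0) :
    z ^ a * w ^ (b - s) * (Ring.choose (b : ℂ) (s - j) *
        (Ring.choose (a : ℂ) j * (w / z) ^ j * (1 + w / z) ^ ((a : ℂ) - j))) =
      Ring.choose (a : ℂ) j * Ring.choose (b : ℂ) (s - j) * (z + w) ^ (a - j) *
        w ^ (b - s + j) := by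
  have hpow : (1 + w / z) ^ ((a : ℂ) - j) = (1 + w / z) ^ (a - j) := by
    rw [← cpow_intCast]
    norm_cast
  rw [hpow, show z + w = z * (1 + w / z) by field_simp, mul_zpow]
  linear_combination
    -(Ring.choose (a : ℂ) j * Ring.choose (b : ℂ) (s - j) * (1 + w / z) ^ (a - j)) *
      zpow_sub_natCast_mul_zpow_add_natCast hz hw a (b - s) j

theorem hasSum_choose_mul_choose_mul_zpow (a b : ℤ) (s : ℕ) (hw : w ≠ 0)
    (hwz : ‖w‖ < ‖z‖) :
    HasSum (fun k : ℕ ↦ Ring.choose (a : ℂ) k * Ring.choose (((k : ℤ) + b : ℤ) : ℂ) s *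
        z ^ (a - k) * w ^ ((k : ℤ) + b - s))
      (∑ j ∈ range (s + 1), Ring.choose (a : ℂ) j * Ring.choose (b : ℂ) (s - j) *
        (z + w) ^ (a - j) * w ^ (b - s + j)) := by
  have hz : z ≠ 0 := norm_pos_iff.1 ((norm_nonneg w).trans_lt hwz)
  have hx : ‖w / z‖ < 1 := by rwa [norm_div, div_lt_one (norm_pos_iff.2 hz)]
  simp only [choose_mul_choose_mul_zpow_eq a b s _ hz hw,
    ← zpow_mul_choose_mul_one_add_cpow_eq a b s _ hz hw, ← mul_sum]
  exact (hasSum_choose_mul_choose_natCast_add_mul_pow _ _ s hx).mul_left _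

theorem summable_norm_choose_mul_choose_mul_zpow (a b : ℤ) (s : ℕ) (hw : w ≠ 0)
    (hwz : ‖w‖ < ‖z‖) :
    Summable fun k : ℕ ↦ ‖Ring.choose (a : ℂ) k *
        Ring.choose (((k : ℤ) + b : ℤ) : ℂ) s * z ^ (a - k) * w ^ ((k : ℤ) + b - s)‖ := by
  have hz : z ≠ 0 := norm_pos_iff.1 ((norm_nonneg w).trans_lt hwz)
  have hx : ‖w / z‖ < 1 := by rwa [norm_div, div_lt_one (norm_pos_iff.2 hz)]
  simp only [choose_mul_choose_mul_zpow_eq a b s _ hz hw, norm_mul _ (_ * _ * _)]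
  exact (summable_norm_choose_mul_choose_natCast_add_mul_pow _ _ s hx).mul_left _

end LaurentExpansion

end Complex

theorem delta_identity_14_9_rhs_coefficient (r t : ℤ) (s : ℕ) (z₁ z₂ : ℂ)
    (h₁ : ‖z₁ - z₂‖ < ‖z₂‖) (h₂ : 0 < ‖z₁ - z₂‖) :
    Summable (fun k : ℕ => ‖cbinom (r - 1) k * cbinom ((k : ℤ) - t - 1) s *
        z₂ ^ (r - 1 - (k : ℤ)) * (z₁ - z₂) ^ ((k : ℤ) - t - (s : ℤ) - 1)‖) ∧
    ∑' k : ℕ, cbinom (r - 1) k * cbinom ((k : ℤ) - t - 1) s *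
        z₂ ^ (r - 1 - (k : ℤ)) * (z₁ - z₂) ^ ((k : ℤ) - t - (s : ℤ) - 1)
      = ∑ j ∈ Finset.range (s + 1), cbinom (r - 1) j * cbinom (-t - 1) (s - j) *
        z₁ ^ (r - 1 - (j : ℤ)) * (z₁ - z₂) ^ (-t - 1 - (s : ℤ) + (j : ℤ)) := by
  have hw : z₁ - z₂ ≠ 0 := norm_pos_iff.1 h₂
  have hchoose : ∀ k : ℤ, k - t - 1 = k + (-t - 1) := fun k ↦ by ring
  have hexp : ∀ k : ℤ, k - t - s - 1 = k + (-t - 1) - s := fun k ↦ by ring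
  have H := Complex.hasSum_choose_mul_choose_mul_zpow (r - 1) (-t - 1) s hw h₁
  rw [add_sub_cancel] at H
  simp only [cbinom_eq_choose, hchoose, hexp]
  exact ⟨Complex.summable_norm_choose_mul_choose_mul_zpow (r - 1) (-t - 1) s hw h₁, H.tsum_eq⟩
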